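/- arXiv:2308.00312 — 7 statements merged into one kernel-verified Lean document; each statement's English description precedes it below -/
import Mathlib

section
/- Let (Ω, μ) and (Δ, ν) be measure spaces, let 1 < p < ∞ with conjugate index q (1/p + 1/q = 1), and let X be a Banach space over 𝕂 (ℝ or ℂ). Let ({f_α}_{α∈Ω}, {τ_α}_{α∈Ω}) and ({g_β}_{β∈Δ}, {ω_β}_{β∈Δ}) be continuous p-Schauder frames for X. Then for every x ∈ X with x ≠ 0, μ(supp(θ_f x))^{1/p} · ν(supp(θ_g x))^{1/q} ≥ 1 / sup_{α∈Ω, β∈Δ} |f_α(ω_β)|. -/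
/-!
Reconstructing `f α x` through the frame `(g, ω)` and applying Hölder's inequality against the
indicator of `supp θ_g x` gives `‖f α x‖ ≤ M ‖x‖ ν(supp θ_g x)^(1/q)` for every `α`, where
`M = sup |f_α(ω_β)|`. Since `θ_f` is an isometry into `L^p`, bounding `‖θ_f x‖_p` by this uniform
bound times `μ(supp θ_f x)^(1/p)` gives `‖x‖ ≤ M ‖x‖ ν(supp θ_g x)^(1/q) μ(supp θ_f x)^(1/p)`,
and dividing by `‖x‖ ≠ 0` finishes the proof.
-/

open MeasureTheory ENNReal Function

section

variable {α E : Type*} [MeasurableSpace α] {μ : Measure α} [NormedAddCommGroup E] {p q : ℝ}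

theorem eLpNorm'_eq_ofReal_of_rpow_eq_integral {u : α → E} {c : ℝ} (hc : 0 < c) (hp : 0 < p)
    (h : c ^ p = ∫ a, ‖u a‖ ^ p ∂μ) : eLpNorm' u p μ = ENNReal.ofReal c := by
  -- a non-integrable function has Bochner integral `0`, while `c ^ p > 0`
  have hint : Integrable (fun a => ‖u a‖ ^ p) μ :=
    Integrable.of_integral_ne_zero (h ▸ (Real.rpow_pos_of_pos hc p).ne')
  have hlintegral : ∫⁻ a, ‖u a‖ₑ ^ p ∂μ = ENNReal.ofReal c ^ p := by
    rw [ofReal_rpow_of_nonneg hc.le hp.le, h,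
      ofReal_integral_eq_lintegral_ofReal hint (ae_of_all _ fun a => by positivity)]
    simp_rw [← ofReal_norm, ofReal_rpow_of_nonneg (norm_nonneg _) hp.le]
  rw [eLpNorm'_eq_lintegral_enorm, hlintegral, one_div, rpow_rpow_inv hp.ne']

theorem lintegral_enorm_le_eLpNorm'_mul_measure_support_rpow {u : α → E}
    (hu : StronglyMeasurable u) (hpq : p.HolderConjugate q) :
    ∫⁻ a, ‖u a‖ₑ ∂μ ≤ eLpNorm' u p μ * μ (support u) ^ (1 / q) := by
  have hs : MeasurableSet (support u) := hu.measurableSet_support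
  have hindicator : ∀ a, (support u).indicator (1 : α → ℝ≥0∞) a ^ q =
      (support u).indicator 1 a := fun a => by
    by_cases ha : a ∈ support u <;> simp [ha, zero_rpow_of_pos hpq.symm.pos]
  calc ∫⁻ a, ‖u a‖ₑ ∂μ = ∫⁻ a, ‖u a‖ₑ * (support u).indicator 1 a ∂μ := by
        congr with a
        by_cases ha : a ∈ support u <;> simp_all
    _ ≤ eLpNorm' u p μ * (∫⁻ a, (support u).indicator 1 a ^ q ∂μ) ^ (1 / q) :=
        ENNReal.lintegral_mul_le_Lp_mul_Lq μ hpq hu.aestronglyMeasurable.enorm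
          (aemeasurable_one.indicator hs)
    _ = eLpNorm' u p μ * μ (support u) ^ (1 / q) := by
        simp_rw [hindicator, lintegral_indicator_one hs]

theorem eLpNorm'_le_mul_measure_support_rpow {u : α → E} {c : ℝ≥0∞} (hp : 0 < p)
    (hc : ∀ a, ‖u a‖ₑ ≤ c) : eLpNorm' u p μ ≤ c * μ (support u) ^ (1 / p) := by
  have hlintegral : ∫⁻ a, ‖u a‖ₑ ^ p ∂μ ≤ c ^ p * μ (support u) :=
    calc ∫⁻ a, ‖u a‖ₑ ^ p ∂μ ≤ ∫⁻ a, (support u).indicator (fun _ => c ^ p) a ∂μ := by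
          refine lintegral_mono fun a => ?_
          by_cases ha : a ∈ support u
          · simpa [ha] using rpow_le_rpow (hc a) hp.le
          · simp_all [zero_rpow_of_pos hp]
      _ ≤ c ^ p * μ (support u) := lintegral_indicator_const_le _ _
  calc eLpNorm' u p μ ≤ (c ^ p * μ (support u)) ^ (1 / p) :=
        rpow_le_rpow hlintegral (by positivity)
    _ = c * μ (support u) ^ (1 / p) := by
        rw [mul_rpow_of_nonneg _ _ (by positivity), one_div, rpow_rpow_inv hp.ne']

theorem enorm_integral_mul_le {A : Type*} [NormedDivisionRing A] [NormedSpace ℝ A]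
    {u v : α → A} {C : ℝ≥0∞} (hu : AEStronglyMeasurable u μ)
    (hv : ∀ a, ‖v a‖ₑ ≤ C) : ‖∫ a, u a * v a ∂μ‖ₑ ≤ C * ∫⁻ a, ‖u a‖ₑ ∂μ :=
  calc ‖∫ a, u a * v a ∂μ‖ₑ ≤ ∫⁻ a, ‖u a * v a‖ₑ ∂μ := enorm_integral_le_lintegral_enorm _
    _ ≤ ∫⁻ a, ‖u a‖ₑ * C ∂μ := lintegral_mono fun a =>
        (enorm_mul (u a) (v a)).trans_le (mul_le_mul_right (hv a) _)
    _ = C * ∫⁻ a, ‖u a‖ₑ ∂μ := by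
        rw [lintegral_mul_const'' _ hu.enorm, mul_comm]

end

theorem functional_continuous_uncertainty_first_general
    {𝕂 : Type*} [RCLike 𝕂]
    {X : Type*} [NormedAddCommGroup X] [NormedSpace 𝕂 X]
    {Ω Δ : Type*} [MeasurableSpace Ω] [MeasurableSpace Δ]
    (μ : Measure Ω) (ν : Measure Δ)
    (p q : ℝ) (hp : 1 < p) (hpq : 1 / p + 1 / q = 1)
    (f : Ω → X →L[𝕂] 𝕂)
    (g : Δ → X →L[𝕂] 𝕂) (ω : Δ → X)
    -- `(f, τ)` is a continuous p-Schauder frame for `X` :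
    (hf_norm : ∀ x : X, ‖x‖ ^ p = ∫ α, ‖f α x‖ ^ p ∂μ)
    -- `(g, ω)` is a continuous p-Schauder frame for `X` :
    (hg_meas : ∀ x : X, StronglyMeasurable fun β : Δ => g β x)
    (hg_norm : ∀ x : X, ‖x‖ ^ p = ∫ β, ‖g β x‖ ^ p ∂ν)
    (hg_rec : ∀ x : X, ∀ φ : X →L[𝕂] 𝕂, φ x = ∫ β, g β x * φ (ω β) ∂ν)
    (x : X) (hx : x ≠ 0) :
    1 / (⨆ (α : Ω) (β : Δ), (‖f α (ω β)‖₊ : ℝ≥0∞)) ≤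
      μ {α : Ω | f α x ≠ 0} ^ (1 / p) * ν {β : Δ | g β x ≠ 0} ^ (1 / q) := by
  set M : ℝ≥0∞ := ⨆ (α : Ω) (β : Δ), ‖f α (ω β)‖ₑ
  have hconj : p.HolderConjugate q :=
    Real.holderConjugate_iff.2 ⟨hp, by simpa only [one_div] using hpq⟩
  have hx₀ : 0 < ‖x‖ := norm_pos_iff.2 hx
  have hf_isometry : eLpNorm' (fun α => f α x) p μ = ‖x‖ₑ := by
    rw [← ofReal_norm]; exact eLpNorm'_eq_ofReal_of_rpow_eq_integral hx₀ hconj.pos (hf_norm x)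
  have hg_isometry : eLpNorm' (fun β => g β x) p ν = ‖x‖ₑ := by
    rw [← ofReal_norm]; exact eLpNorm'_eq_ofReal_of_rpow_eq_integral hx₀ hconj.pos (hg_norm x)
  have hpointwise (α : Ω) : ‖f α x‖ₑ ≤ M * ‖x‖ₑ * ν {β | g β x ≠ 0} ^ (1 / q) :=
    calc ‖f α x‖ₑ = ‖∫ β, g β x * f α (ω β) ∂ν‖ₑ := by rw [← hg_rec]
      _ ≤ M * ∫⁻ β, ‖g β x‖ₑ ∂ν :=
          enorm_integral_mul_le (hg_meas x).aestronglyMeasurable fun β =>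
            le_iSup₂ (f := fun α β => ‖f α (ω β)‖ₑ) α β
      _ ≤ M * ‖x‖ₑ * ν {β | g β x ≠ 0} ^ (1 / q) := by
          rw [mul_assoc, ← hg_isometry]
          gcongr
          exact lintegral_enorm_le_eLpNorm'_mul_measure_support_rpow (hg_meas x) hconj
  have hnorm :
      ‖x‖ₑ * 1 ≤ ‖x‖ₑ * (μ {α | f α x ≠ 0} ^ (1 / p) * ν {β | g β x ≠ 0} ^ (1 / q) * M) :=
    calc ‖x‖ₑ * 1 = eLpNorm' (fun α => f α x) p μ := by rw [mul_one, hf_isometry]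
      _ ≤ M * ‖x‖ₑ * ν {β | g β x ≠ 0} ^ (1 / q) * μ {α | f α x ≠ 0} ^ (1 / p) :=
          eLpNorm'_le_mul_measure_support_rpow hconj.pos hpointwise
      _ = _ := by ring
  exact div_le_of_le_mul
    ((ENNReal.mul_le_mul_iff_right (enorm_ne_zero.2 hx) enorm_ne_top).1 hnorm)

/-- **Functional Continuous Uncertainty Principle** (first inequality).
If `(f, τ)` and `(g, ω)` are continuous p-Schauder frames for a Banach space `X`,
then for every nonzero `x`,
`μ(supp θ_f x)^(1/p) * ν(supp θ_g x)^(1/q) ≥ 1 / sup_{α,β} |f_α(ω_β)|`. -/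
theorem functional_continuous_uncertainty_first
    {𝕂 : Type*} [RCLike 𝕂]
    {X : Type*} [NormedAddCommGroup X] [NormedSpace 𝕂 X] [CompleteSpace X]
    {Ω Δ : Type*} [MeasurableSpace Ω] [MeasurableSpace Δ]
    (μ : Measure Ω) (ν : Measure Δ)
    (p q : ℝ) (hp : 1 < p) (hpq : 1 / p + 1 / q = 1)
    (f : Ω → X →L[𝕂] 𝕂) (τ : Ω → X)
    (g : Δ → X →L[𝕂] 𝕂) (ω : Δ → X)
    -- `(f, τ)` is a continuous p-Schauder frame for `X` :
    (hf_meas : ∀ x : X, StronglyMeasurable fun α : Ω => f α x)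
    (hf_norm : ∀ x : X, ‖x‖ ^ p = ∫ α, ‖f α x‖ ^ p ∂μ)
    (hf_int : ∀ x : X, ∀ φ : X →L[𝕂] 𝕂, Integrable (fun α : Ω => f α x * φ (τ α)) μ)
    (hf_rec : ∀ x : X, ∀ φ : X →L[𝕂] 𝕂, φ x = ∫ α, f α x * φ (τ α) ∂μ)
    -- `(g, ω)` is a continuous p-Schauder frame for `X` :
    (hg_meas : ∀ x : X, StronglyMeasurable fun β : Δ => g β x)
    (hg_norm : ∀ x : X, ‖x‖ ^ p = ∫ β, ‖g β x‖ ^ p ∂ν)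
    (hg_int : ∀ x : X, ∀ φ : X →L[𝕂] 𝕂, Integrable (fun β : Δ => g β x * φ (ω β)) ν)
    (hg_rec : ∀ x : X, ∀ φ : X →L[𝕂] 𝕂, φ x = ∫ β, g β x * φ (ω β) ∂ν)
    (x : X) (hx : x ≠ 0) :
    1 / (⨆ (α : Ω) (β : Δ), (‖f α (ω β)‖₊ : ℝ≥0∞)) ≤
      μ {α : Ω | f α x ≠ 0} ^ (1 / p) * ν {β : Δ | g β x ≠ 0} ^ (1 / q) :=
  functional_continuous_uncertainty_first_general μ ν p q hp hpq f g ω hf_norm hg_meas hg_norm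
    hg_rec x hx
end

section
/- Let (Ω, μ) and (Δ, ν) be measure spaces and let {τ_α}_{α∈Ω} and {ω_β}_{β∈Δ} be Parseval continuous frames for a Hilbert space H over 𝕂 (ℝ or ℂ). Then for every h ∈ H with h ≠ 0, μ(supp(θ_τ h)) · ν(supp(θ_ω h)) ≥ 1 / sup_{α∈Ω, β∈Δ} |⟨ω_β, τ_α⟩|². -/
open MeasureTheory ENNReal

/-!
Polarizing the Parseval identity of `ω` gives `⟪h, τ α⟫ = ∫ ⟪h, ω β⟫ ⟪ω β, τ α⟫ dν`, whose integrand
vanishes off `supp θ_ω h`. Cauchy–Schwarz on that set bounds `|⟪h, τ α⟫|²` by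
`‖h‖² ν(supp θ_ω h) M`, where `M = sup |⟪ω β, τ α⟫|²`. Integrating this over `supp θ_τ h` and using
the Parseval identity of `τ` yields `‖h‖² ≤ ‖h‖² μ(supp θ_τ h) ν(supp θ_ω h) M`, and `h ≠ 0` lets us
cancel `‖h‖²`.
-/

def IsParsevalFrame (𝕂 : Type*) {H Ω : Type*} [RCLike 𝕂] [NormedAddCommGroup H]
    [InnerProductSpace 𝕂 H] [MeasurableSpace Ω] (μ : Measure Ω) (τ : Ω → H) : Prop :=
  ∀ h : H, ‖h‖ ^ 2 = ∫ α, ‖(inner 𝕂 h (τ α) : 𝕂)‖ ^ 2 ∂μ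

theorem ENNReal.sq_lintegral_mul_le {α : Type*} [MeasurableSpace α] {μ : Measure α}
    {f g : α → ℝ≥0∞} (hf : AEMeasurable f μ) (hg : AEMeasurable g μ) :
    (∫⁻ a, f a * g a ∂μ) ^ 2 ≤ (∫⁻ a, f a ^ 2 ∂μ) * ∫⁻ a, g a ^ 2 ∂μ := by
  have hsq : ∀ x : ℝ≥0∞, (x ^ (1 / 2 : ℝ)) ^ 2 = x := fun x => by
    rw [← ENNReal.rpow_natCast, ← ENNReal.rpow_mul]; norm_num
  have := ENNReal.lintegral_mul_le_Lp_mul_Lq μ Real.HolderConjugate.two_two hf hg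
  simp only [Pi.mul_apply, ENNReal.rpow_two] at this
  calc _ ≤ _ := pow_le_pow_left' this 2
    _ = _ := by rw [mul_pow, hsq, hsq]

namespace IsParsevalFrame

variable {𝕂 : Type*} [RCLike 𝕂] {H : Type*} [NormedAddCommGroup H] [InnerProductSpace 𝕂 H]
  {Δ : Type*} [MeasurableSpace Δ] {ν : Measure Δ} {ω : Δ → H}

-- A non-integrable integrand has Bochner integral `0`, which the frame identity allows only at
-- `h = 0`.
theorem integrable_norm_inner_sq (hω : IsParsevalFrame 𝕂 ν ω) (h : H) :
    Integrable (fun β => ‖(inner 𝕂 h (ω β) : 𝕂)‖ ^ 2) ν := by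
  by_contra hint
  have h0 : h = 0 := by simpa [integral_undef hint] using hω h
  simp [h0] at hint

theorem integrable_norm_inner_sq' (hω : IsParsevalFrame 𝕂 ν ω) (h : H) :
    Integrable (fun β => ‖(inner 𝕂 (ω β) h : 𝕂)‖ ^ 2) ν := by
  simpa only [norm_inner_symm] using hω.integrable_norm_inner_sq h

theorem aemeasurable_enorm_inner (hω : IsParsevalFrame 𝕂 ν ω) (h : H) :
    AEMeasurable (fun β => ‖(inner 𝕂 h (ω β) : 𝕂)‖ₑ) ν := by
  have := (ENNReal.measurable_ofReal.comp Real.continuous_sqrt.measurable).comp_aemeasurable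
    (hω.integrable_norm_inner_sq h).aestronglyMeasurable.aemeasurable
  convert this using 2 with β
  simp [Real.sqrt_sq (norm_nonneg _), ofReal_norm]

theorem lintegral_enorm_inner_sq (hω : IsParsevalFrame 𝕂 ν ω) (h : H) :
    ∫⁻ β, ‖(inner 𝕂 h (ω β) : 𝕂)‖ₑ ^ 2 ∂ν = ‖h‖ₑ ^ 2 := by
  rw [← ofReal_norm, ← ENNReal.ofReal_pow (norm_nonneg _), hω h,
    ofReal_integral_eq_lintegral_ofReal (hω.integrable_norm_inner_sq h)
      (Filter.Eventually.of_forall fun β => by positivity)]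
  simp_rw [ENNReal.ofReal_pow (norm_nonneg _), ofReal_norm]

theorem inner_eq_integral (hω : IsParsevalFrame 𝕂 ν ω) (u v : H) :
    (inner 𝕂 u v : 𝕂) = ∫ β, (inner 𝕂 u (ω β) : 𝕂) * inner 𝕂 (ω β) v ∂ν := by
  -- both sides are the polarization of `‖x‖ ^ 2 = ∫ β, ‖⟪ω β, x⟫‖ ^ 2 ∂ν`
  have hpol : ∀ β, (inner 𝕂 u (ω β) : 𝕂) * inner 𝕂 (ω β) v =
      ((‖(inner 𝕂 (ω β) (u + v) : 𝕂)‖ : 𝕂) ^ 2 - (‖(inner 𝕂 (ω β) (u - v) : 𝕂)‖ : 𝕂) ^ 2 +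
        ((‖(inner 𝕂 (ω β) (u - (RCLike.I : 𝕂) • v) : 𝕂)‖ : 𝕂) ^ 2 -
          (‖(inner 𝕂 (ω β) (u + (RCLike.I : 𝕂) • v) : 𝕂)‖ : 𝕂) ^ 2) * (RCLike.I : 𝕂)) / 4 := by
    intro β
    rw [← inner_conj_symm u, ← RCLike.inner_apply', inner_eq_sum_norm_sq_div_four]
    simp only [inner_add_right, inner_sub_right, inner_smul_right, smul_eq_mul]
  have hint : ∀ x : H, Integrable (fun β => (‖(inner 𝕂 (ω β) x : 𝕂)‖ : 𝕂) ^ 2) ν := fun x => by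
    simpa using (hω.integrable_norm_inner_sq' x).ofReal (𝕜 := 𝕂)
  have hval : ∀ x : H, ∫ β, (‖(inner 𝕂 (ω β) x : 𝕂)‖ : 𝕂) ^ 2 ∂ν = (‖x‖ : 𝕂) ^ 2 := fun x => by
    simp_rw [norm_inner_symm (ω _) x, ← RCLike.ofReal_pow]
    rw [integral_ofReal, ← hω x, RCLike.ofReal_pow]
  simp_rw [hpol]
  rw [integral_div, integral_add, integral_sub, integral_mul_const, integral_sub, hval, hval, hval,
    hval, ← inner_eq_sum_norm_sq_div_four]
  all_goals
    first | exact hint _ | exact (hint _).sub (hint _) | exact ((hint _).sub (hint _)).mul_const _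

theorem enorm_inner_sq_le (hω : IsParsevalFrame 𝕂 ν ω) (h v : H) :
    ‖(inner 𝕂 h v : 𝕂)‖ₑ ^ 2 ≤
      ‖h‖ₑ ^ 2 * (ν {β | (inner 𝕂 h (ω β) : 𝕂) ≠ 0} * ⨆ β, ‖(inner 𝕂 (ω β) v : 𝕂)‖ₑ ^ 2) := by
  set S := {β | (inner 𝕂 h (ω β) : 𝕂) ≠ 0}
  set M := ⨆ β, ‖(inner 𝕂 (ω β) v : 𝕂)‖ₑ ^ 2
  have hsupp : (fun β => ‖(inner 𝕂 h (ω β) : 𝕂)‖ₑ * ‖(inner 𝕂 (ω β) v : 𝕂)‖ₑ).support ⊆ S :=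
    fun β hβ hS => hβ (by simp [hS])
  have hmeas : AEMeasurable (fun β => ‖(inner 𝕂 (ω β) v : 𝕂)‖ₑ) ν := by
    simpa only [← ofReal_norm, norm_inner_symm v] using hω.aemeasurable_enorm_inner v
  calc ‖(inner 𝕂 h v : 𝕂)‖ₑ ^ 2
      = ‖∫ β, (inner 𝕂 h (ω β) : 𝕂) * inner 𝕂 (ω β) v ∂ν‖ₑ ^ 2 := by
        rw [← hω.inner_eq_integral]
    _ ≤ (∫⁻ β, ‖(inner 𝕂 h (ω β) : 𝕂)‖ₑ * ‖(inner 𝕂 (ω β) v : 𝕂)‖ₑ ∂ν) ^ 2 := by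
        simp_rw [← enorm_mul]
        exact pow_le_pow_left' (enorm_integral_le_lintegral_enorm _) 2
    _ = (∫⁻ β in S, ‖(inner 𝕂 h (ω β) : 𝕂)‖ₑ * ‖(inner 𝕂 (ω β) v : 𝕂)‖ₑ ∂ν) ^ 2 := by
        rw [setLIntegral_eq_of_support_subset hsupp]
    _ ≤ (∫⁻ β in S, ‖(inner 𝕂 h (ω β) : 𝕂)‖ₑ ^ 2 ∂ν) *
          ∫⁻ β in S, ‖(inner 𝕂 (ω β) v : 𝕂)‖ₑ ^ 2 ∂ν :=
        ENNReal.sq_lintegral_mul_le (hω.aemeasurable_enorm_inner h).restrict hmeas.restrict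
    _ ≤ ‖h‖ₑ ^ 2 * ∫⁻ _ in S, M ∂ν :=
        mul_le_mul' ((setLIntegral_le_lintegral _ _).trans_eq (hω.lintegral_enorm_inner_sq h))
          (lintegral_mono fun β => le_iSup (fun β => ‖(inner 𝕂 (ω β) v : 𝕂)‖ₑ ^ 2) β)
    _ = ‖h‖ₑ ^ 2 * (ν S * M) := by rw [setLIntegral_const, mul_comm M]

end IsParsevalFrame

theorem parseval_continuous_frame_uncertainty_first_general
    {𝕂 : Type*} [RCLike 𝕂]
    {H : Type*} [NormedAddCommGroup H] [InnerProductSpace 𝕂 H]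
    {Ω Δ : Type*} [MeasurableSpace Ω] [MeasurableSpace Δ]
    (μ : Measure Ω) (ν : Measure Δ)
    (τ : Ω → H) (ω : Δ → H)
    -- `τ` is a Parseval continuous frame for `H` :
    (hτ_norm : ∀ h : H, ‖h‖ ^ 2 = ∫ α, ‖(inner 𝕂 h (τ α) : 𝕂)‖ ^ 2 ∂μ)
    -- `ω` is a Parseval continuous frame for `H` :
    (hω_norm : ∀ h : H, ‖h‖ ^ 2 = ∫ β, ‖(inner 𝕂 h (ω β) : 𝕂)‖ ^ 2 ∂ν)
    (h : H) (hh : h ≠ 0) :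
    1 / (⨆ (α : Ω) (β : Δ), (‖(inner 𝕂 (ω β) (τ α) : 𝕂)‖₊ : ℝ≥0∞) ^ 2) ≤
      μ {α : Ω | (inner 𝕂 h (τ α) : 𝕂) ≠ 0} * ν {β : Δ | (inner 𝕂 h (ω β) : 𝕂) ≠ 0} := by
  set Sτ := {α : Ω | (inner 𝕂 h (τ α) : 𝕂) ≠ 0}
  set Sω := {β : Δ | (inner 𝕂 h (ω β) : 𝕂) ≠ 0}
  set M := ⨆ (α : Ω) (β : Δ), (‖(inner 𝕂 (ω β) (τ α) : 𝕂)‖₊ : ℝ≥0∞) ^ 2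
  have hτ : IsParsevalFrame 𝕂 μ τ := hτ_norm
  have hω : IsParsevalFrame 𝕂 ν ω := hω_norm
  have hcoeff (α : Ω) : ‖(inner 𝕂 h (τ α) : 𝕂)‖ₑ ^ 2 ≤ ‖h‖ₑ ^ 2 * (ν Sω * M) :=
    (hω.enorm_inner_sq_le h (τ α)).trans <| by
      gcongr
      exact iSup_le fun β => le_iSup₂ (f := fun α β => ‖(inner 𝕂 (ω β) (τ α) : 𝕂)‖ₑ ^ 2) α β
  have hsupp : (fun α => ‖(inner 𝕂 h (τ α) : 𝕂)‖ₑ ^ 2).support ⊆ Sτ :=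
    fun α hα hS => hα (by simp [hS])
  have hnorm : ‖h‖ₑ ^ 2 ≤ ‖h‖ₑ ^ 2 * (μ Sτ * ν Sω * M) :=
    calc ‖h‖ₑ ^ 2 = ∫⁻ α in Sτ, ‖(inner 𝕂 h (τ α) : 𝕂)‖ₑ ^ 2 ∂μ := by
          rw [setLIntegral_eq_of_support_subset hsupp, hτ.lintegral_enorm_inner_sq]
      _ ≤ ∫⁻ _ in Sτ, ‖h‖ₑ ^ 2 * (ν Sω * M) ∂μ := lintegral_mono hcoeff
      _ = ‖h‖ₑ ^ 2 * (μ Sτ * ν Sω * M) := by rw [setLIntegral_const]; ring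
  have hh₀ : ‖h‖ₑ ^ 2 ≠ 0 := by simpa using hh
  refine ENNReal.div_le_of_le_mul <| (ENNReal.mul_le_mul_iff_right hh₀ (by simp)).1 ?_
  rwa [mul_one]

/-- Continuous uncertainty principle for Parseval continuous frames in a Hilbert space:
`μ(supp θ_τ h) * ν(supp θ_ω h) ≥ 1 / sup_{α,β} |⟪ω_β, τ_α⟫|²` for every nonzero `h`. -/
theorem parseval_continuous_frame_uncertainty_first
    {𝕂 : Type*} [RCLike 𝕂]
    {H : Type*} [NormedAddCommGroup H] [InnerProductSpace 𝕂 H] [CompleteSpace H]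
    {Ω Δ : Type*} [MeasurableSpace Ω] [MeasurableSpace Δ]
    (μ : Measure Ω) (ν : Measure Δ)
    (τ : Ω → H) (ω : Δ → H)
    -- `τ` is a Parseval continuous frame for `H` :
    (hτ_meas : ∀ h : H, StronglyMeasurable fun α : Ω => (inner 𝕂 h (τ α) : 𝕂))
    (hτ_norm : ∀ h : H, ‖h‖ ^ 2 = ∫ α, ‖(inner 𝕂 h (τ α) : 𝕂)‖ ^ 2 ∂μ)
    -- `ω` is a Parseval continuous frame for `H` :
    (hω_meas : ∀ h : H, StronglyMeasurable fun β : Δ => (inner 𝕂 h (ω β) : 𝕂))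
    (hω_norm : ∀ h : H, ‖h‖ ^ 2 = ∫ β, ‖(inner 𝕂 h (ω β) : 𝕂)‖ ^ 2 ∂ν)
    (h : H) (hh : h ≠ 0) :
    1 / (⨆ (α : Ω) (β : Δ), (‖(inner 𝕂 (ω β) (τ α) : 𝕂)‖₊ : ℝ≥0∞) ^ 2) ≤
      μ {α : Ω | (inner 𝕂 h (τ α) : 𝕂) ≠ 0} * ν {β : Δ | (inner 𝕂 h (ω β) : 𝕂) ≠ 0} :=
  parseval_continuous_frame_uncertainty_first_general μ ν τ ω hτ_norm hω_norm h hh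
end

section
/- Let X be a finite-dimensional Banach space over 𝕂 (ℝ or ℂ), let 1 < p < ∞ with conjugate index q (1/p + 1/q = 1), and let ({f_j}_{j=1}^n, {τ_j}_{j=1}^n) and ({g_k}_{k=1}^m, {ω_k}_{k=1}^m) be p-Schauder frames for X. Then for every x ∈ X with x ≠ 0, ‖θ_f x‖₀^{1/p} · ‖θ_g x‖₀^{1/q} ≥ 1 / max_{1≤j≤n, 1≤k≤m} |f_j(ω_k)|. -/
/-!
Expanding `x` in the frame `(g, ω)` gives `f j x = ∑ₖ g k x * f j (ω k)`, so every `|f j x|` is at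
most `M * ‖θ_g x‖₁`, where `M = max |f j (ω k)|`. Hölder's inequality on the support of `θ_g x`
bounds `‖θ_g x‖₁ ≤ ‖θ_g x‖₀^(1/q) * ‖θ_g x‖_p = ‖θ_g x‖₀^(1/q) * ‖x‖`, and summing the p-th
powers of the at most `‖θ_f x‖₀` nonzero `|f j x|` gives
`‖x‖ ≤ ‖θ_f x‖₀^(1/p) * M * ‖θ_g x‖₀^(1/q) * ‖x‖`. Dividing by `‖x‖ ≠ 0` yields the claim.
-/

open Finset

theorem eq_rpow_one_div_of_rpow_eq {r s p : ℝ} (hr : 0 ≤ r) (hp : p ≠ 0) (h : r ^ p = s) :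
    r = s ^ (1 / p) := by
  rw [← h, one_div, Real.rpow_rpow_inv hr hp]

section SupportCard

variable {ι E : Type*} [Fintype ι]

theorem natCard_ne_zero_eq_card_filter [Zero E] (a : ι → E) [DecidablePred (a · ≠ 0)] :
    Nat.card {i // a i ≠ 0} = #{i | a i ≠ 0} := by
  rw [Nat.card_eq_fintype_card, Fintype.card_subtype]

variable [NormedAddCommGroup E]

theorem sum_filter_ne_zero_norm_rpow {p : ℝ} (hp : p ≠ 0) (a : ι → E) [DecidablePred (a · ≠ 0)] :
    ∑ i with a i ≠ 0, ‖a i‖ ^ p = ∑ i, ‖a i‖ ^ p :=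
  sum_filter_of_ne fun i _ h hai => h (by rw [hai, norm_zero, Real.zero_rpow hp])

theorem sum_norm_le_natCard_support_rpow_mul {p q : ℝ} (hpq : p.HolderConjugate q) (a : ι → E) :
    ∑ i, ‖a i‖ ≤ (Nat.card {i // a i ≠ 0} : ℝ) ^ (1 / q) * (∑ i, ‖a i‖ ^ p) ^ (1 / p) := by
  classical
  calc ∑ i, ‖a i‖ = ∑ i with a i ≠ 0, ‖a i‖ * 1 := by
        simp only [mul_one]
        exact (sum_filter_of_ne fun i _ h => norm_ne_zero_iff.mp h).symm
    _ ≤ (∑ i with a i ≠ 0, ‖a i‖ ^ p) ^ (1 / p) * (∑ i with a i ≠ 0, (1 : ℝ) ^ q) ^ (1 / q) :=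
        Real.inner_le_Lp_mul_Lq_of_nonneg _ hpq (fun _ _ => norm_nonneg _) fun _ _ => zero_le_one
    _ = (Nat.card {i // a i ≠ 0} : ℝ) ^ (1 / q) * (∑ i, ‖a i‖ ^ p) ^ (1 / p) := by
        rw [sum_filter_ne_zero_norm_rpow hpq.ne_zero, natCard_ne_zero_eq_card_filter]
        simp only [Real.one_rpow, sum_const, nsmul_eq_mul, mul_one]
        ring

theorem rpow_sum_norm_rpow_le_natCard_support_rpow_mul {p C : ℝ} (hp : 0 < p) (hC : 0 ≤ C)
    {a : ι → E} (ha : ∀ i, ‖a i‖ ≤ C) :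
    (∑ i, ‖a i‖ ^ p) ^ (1 / p) ≤ (Nat.card {i // a i ≠ 0} : ℝ) ^ (1 / p) * C := by
  classical
  have hsum : ∑ i, ‖a i‖ ^ p ≤ Nat.card {i // a i ≠ 0} * C ^ p := by
    rw [← sum_filter_ne_zero_norm_rpow hp.ne', natCard_ne_zero_eq_card_filter, ← nsmul_eq_mul,
      ← sum_const]
    exact sum_le_sum fun i _ => Real.rpow_le_rpow (norm_nonneg _) (ha i) hp.le
  calc (∑ i, ‖a i‖ ^ p) ^ (1 / p) ≤ (Nat.card {i // a i ≠ 0} * C ^ p) ^ (1 / p) :=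
        Real.rpow_le_rpow (sum_nonneg fun _ _ => by positivity) hsum (by positivity)
    _ = (Nat.card {i // a i ≠ 0} : ℝ) ^ (1 / p) * C := by
        rw [Real.mul_rpow (by positivity) (by positivity), ← Real.rpow_mul hC,
          mul_one_div_cancel hp.ne', Real.rpow_one]

end SupportCard

theorem norm_map_sum_smul_le {𝕂 X F L κ : Type*} [RCLike 𝕂] [AddCommGroup X] [Module 𝕂 X]
    [NormedAddCommGroup F] [NormedSpace 𝕂 F] [FunLike L X F] [LinearMapClass L 𝕂 X F] [Fintype κ]
    (φ : L) (c : κ → 𝕂) (ω : κ → X) {M : ℝ}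
    (hM : ∀ k, ‖φ (ω k)‖ ≤ M) : ‖φ (∑ k, c k • ω k)‖ ≤ M * ∑ k, ‖c k‖ := by
  rw [map_sum, mul_sum]
  refine (norm_sum_le _ _).trans (sum_le_sum fun k _ => ?_)
  rw [map_smul, norm_smul, mul_comm M]
  exact mul_le_mul_of_nonneg_left (hM k) (norm_nonneg _)

theorem norm_map_le_natCard_support_rpow_mul_norm {𝕂 X F L κ : Type*} [RCLike 𝕂]
    [NormedAddCommGroup X] [NormedSpace 𝕂 X] [NormedAddCommGroup F] [NormedSpace 𝕂 F]
    [FunLike L X F] [LinearMapClass L 𝕂 X F] [Fintype κ] {p q M : ℝ} (hpq : p.HolderConjugate q)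
    (hM₀ : 0 ≤ M) (φ : L) (ω : κ → X) (hM : ∀ k, ‖φ (ω k)‖ ≤ M) {x : X} {c : κ → 𝕂}
    (hx_rec : x = ∑ k, c k • ω k) (hx_norm : ‖x‖ ^ p = ∑ k, ‖c k‖ ^ p) :
    ‖φ x‖ ≤ M * ((Nat.card {k // c k ≠ 0} : ℝ) ^ (1 / q) * ‖x‖) := by
  have hx := eq_rpow_one_div_of_rpow_eq (norm_nonneg x) hpq.ne_zero hx_norm
  calc ‖φ x‖ ≤ M * ∑ k, ‖c k‖ := hx_rec ▸ norm_map_sum_smul_le φ c ω hM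
    _ ≤ M * ((Nat.card {k // c k ≠ 0} : ℝ) ^ (1 / q) * ‖x‖) :=
        hx ▸ mul_le_mul_of_nonneg_left (sum_norm_le_natCard_support_rpow_mul hpq c) hM₀

theorem functional_donoho_stark_first_general
    {𝕂 : Type*} [RCLike 𝕂]
    {X : Type*} [NormedAddCommGroup X] [NormedSpace 𝕂 X]
    {n m : ℕ} (p q : ℝ) (hp : 1 < p) (hpq : 1 / p + 1 / q = 1)
    (f : Fin n → X →L[𝕂] 𝕂)
    (g : Fin m → X →L[𝕂] 𝕂) (ω : Fin m → X)
    -- `(f, τ)` is a p-Schauder frame for `X` :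
    (hf_norm : ∀ x : X, ‖x‖ ^ p = ∑ j, ‖f j x‖ ^ p)
    -- `(g, ω)` is a p-Schauder frame for `X` :
    (hg_norm : ∀ x : X, ‖x‖ ^ p = ∑ k, ‖g k x‖ ^ p)
    (hg_rec : ∀ x : X, x = ∑ k, g k x • ω k)
    (x : X) (hx : x ≠ 0) :
    1 / (⨆ (j : Fin n) (k : Fin m), ‖f j (ω k)‖) ≤
      (Nat.card {j : Fin n // f j x ≠ 0} : ℝ) ^ (1 / p) *
        (Nat.card {k : Fin m // g k x ≠ 0} : ℝ) ^ (1 / q) := by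
  have hpq' : p.HolderConjugate q :=
    Real.holderConjugate_iff.mpr ⟨hp, by simpa only [one_div] using hpq⟩
  set M := ⨆ (j : Fin n) (k : Fin m), ‖f j (ω k)‖
  set A : ℝ := (Nat.card {j : Fin n // f j x ≠ 0} : ℝ)
  set B : ℝ := (Nat.card {k : Fin m // g k x ≠ 0} : ℝ)
  have hM₀ : 0 ≤ M := Real.iSup_nonneg fun j => Real.iSup_nonneg fun k => norm_nonneg _
  have hM : ∀ j k, ‖f j (ω k)‖ ≤ M := fun j k =>
    (Finite.le_ciSup (fun k => ‖f j (ω k)‖) k).trans (Finite.le_ciSup (fun j => ⨆ k, ‖f j (ω k)‖) j)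
  have hfx : ∀ j, ‖f j x‖ ≤ M * (B ^ (1 / q) * ‖x‖) := fun j =>
    norm_map_le_natCard_support_rpow_mul_norm hpq' hM₀ (f j) ω (hM j) (hg_rec x) (hg_norm x)
  have hx_le : ‖x‖ ≤ A ^ (1 / p) * (M * (B ^ (1 / q) * ‖x‖)) :=
    calc ‖x‖ = (∑ j, ‖f j x‖ ^ p) ^ (1 / p) :=
          eq_rpow_one_div_of_rpow_eq (norm_nonneg x) hpq'.ne_zero (hf_norm x)
      _ ≤ A ^ (1 / p) * (M * (B ^ (1 / q) * ‖x‖)) :=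
          rpow_sum_norm_rpow_le_natCard_support_rpow_mul hpq'.pos (by positivity) hfx
  have hone : 1 ≤ A ^ (1 / p) * B ^ (1 / q) * M := by
    refine le_of_mul_le_mul_right ?_ (norm_pos_iff.mpr hx)
    linarith
  exact div_le_of_le_mul₀ hM₀ (by positivity) hone

/-- **Functional Donoho-Stark-Elad-Bruckstein-Ricaud-Torrésani Uncertainty Principle**
(first inequality). If `(f, τ)` and `(g, ω)` are p-Schauder frames for a
finite-dimensional Banach space `X`, then for every nonzero `x`,
`‖θ_f x‖₀^(1/p) * ‖θ_g x‖₀^(1/q) ≥ 1 / max_{j,k} |f_j(ω_k)|`. -/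
theorem functional_donoho_stark_first
    {𝕂 : Type*} [RCLike 𝕂]
    {X : Type*} [NormedAddCommGroup X] [NormedSpace 𝕂 X] [FiniteDimensional 𝕂 X]
    {n m : ℕ} (p q : ℝ) (hp : 1 < p) (hpq : 1 / p + 1 / q = 1)
    (f : Fin n → X →L[𝕂] 𝕂) (τ : Fin n → X)
    (g : Fin m → X →L[𝕂] 𝕂) (ω : Fin m → X)
    -- `(f, τ)` is a p-Schauder frame for `X` :
    (hf_norm : ∀ x : X, ‖x‖ ^ p = ∑ j, ‖f j x‖ ^ p)
    (hf_rec : ∀ x : X, x = ∑ j, f j x • τ j)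
    -- `(g, ω)` is a p-Schauder frame for `X` :
    (hg_norm : ∀ x : X, ‖x‖ ^ p = ∑ k, ‖g k x‖ ^ p)
    (hg_rec : ∀ x : X, x = ∑ k, g k x • ω k)
    (x : X) (hx : x ≠ 0) :
    1 / (⨆ (j : Fin n) (k : Fin m), ‖f j (ω k)‖) ≤
      (Nat.card {j : Fin n // f j x ≠ 0} : ℝ) ^ (1 / p) *
        (Nat.card {k : Fin m // g k x ≠ 0} : ℝ) ^ (1 / q) :=
  functional_donoho_stark_first_general p q hp hpq f g ω hf_norm hg_norm hg_rec x hx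
end

section
/- Let X be a finite-dimensional Banach space over 𝕂 (ℝ or ℂ), let 1 < p < ∞ with conjugate index q (1/p + 1/q = 1), and let ({f_j}_{j=1}^n, {τ_j}_{j=1}^n) and ({g_k}_{k=1}^m, {ω_k}_{k=1}^m) be p-Schauder frames for X. Then for every x ∈ X with x ≠ 0, ‖θ_g x‖₀^{1/p} · ‖θ_f x‖₀^{1/q} ≥ 1 / max_{1≤j≤n, 1≤k≤m} |g_k(τ_j)|. -/
/-! Expanding `x = ∑ⱼ fⱼ(x) τⱼ` gives `|gₖ(x)| ≤ M ∑ⱼ |fⱼ(x)|` with `M = maxⱼₖ |gₖ(τⱼ)|`, and Hölder's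
inequality over the support of `θ_f x` bounds the p-th power of that sum by
`‖θ_f x‖₀^(p-1) ‖x‖^p`. Summing `|gₖ(x)|^p` over the support of `θ_g x` then yields
`‖x‖^p ≤ ‖θ_g x‖₀ M^p ‖θ_f x‖₀^(p-1) ‖x‖^p`; cancelling `‖x‖^p ≠ 0` and taking p-th roots, with
`(p - 1) / p = 1 / q`, gives the claim. -/

open Finset

section SupportCard

variable {ι E : Type*} [Fintype ι] [NormedAddCommGroup E]

-- Hölder's inequality against the indicator function of the support of `v`.
lemma rpow_sum_norm_le_card_support_rpow_mul {p : ℝ} (hp : 1 ≤ p) (v : ι → E) :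
    (∑ i, ‖v i‖) ^ p ≤ (Nat.card {i // v i ≠ 0} : ℝ) ^ (p - 1) * ∑ i, ‖v i‖ ^ p := by
  classical
  have hsupp : ∑ i, ‖v i‖ = ∑ i with v i ≠ 0, ‖v i‖ :=
    (sum_filter_of_ne fun i _ hi => norm_ne_zero_iff.mp hi).symm
  rw [hsupp, Nat.card_eq_fintype_card, Fintype.card_subtype]
  refine (Real.rpow_sum_le_const_mul_sum_rpow_of_nonneg _ hp fun i _ => norm_nonneg _).trans ?_
  gcongr
  exact filter_subset _ _

lemma sum_norm_rpow_le_card_support_mul {p : ℝ} (hp : 0 < p) (v : ι → E) {D : ℝ}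
    (hD : ∀ i, ‖v i‖ ^ p ≤ D) :
    ∑ i, ‖v i‖ ^ p ≤ Nat.card {i // v i ≠ 0} * D := by
  classical
  have hsupp : ∑ i, ‖v i‖ ^ p = ∑ i with v i ≠ 0, ‖v i‖ ^ p := by
    refine (sum_filter_of_ne fun i _ hi => ?_).symm
    intro h₀
    rw [h₀, norm_zero, Real.zero_rpow hp.ne'] at hi
    exact hi rfl
  rw [hsupp, Nat.card_eq_fintype_card, Fintype.card_subtype, ← nsmul_eq_mul]
  exact sum_le_card_nsmul _ _ _ fun i _ => hD i

end SupportCard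

lemma norm_map_sum_smul_le_s5 {𝕂 X Y ι : Type*} [RCLike 𝕂] [NormedAddCommGroup X] [NormedSpace 𝕂 X]
    [NormedAddCommGroup Y] [NormedSpace 𝕂 Y] [Fintype ι] (φ : X →ₗ[𝕂] Y) (c : ι → 𝕂)
    (τ : ι → X) {M : ℝ} (hM : ∀ j, ‖φ (τ j)‖ ≤ M) :
    ‖φ (∑ j, c j • τ j)‖ ≤ M * ∑ j, ‖c j‖ := by
  rw [map_sum, mul_sum]
  refine (norm_sum_le _ _).trans (sum_le_sum fun j _ => ?_)
  rw [map_smul, norm_smul, mul_comm]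
  exact mul_le_mul_of_nonneg_right (hM j) (norm_nonneg _)

lemma one_div_le_rpow_mul_rpow_of_one_le_mul_rpow {p q a b M : ℝ} (hp : 0 < p)
    (hpq : 1 / p + 1 / q = 1) (ha : 0 ≤ a) (hb : 0 ≤ b) (hM : 0 ≤ M)
    (h : 1 ≤ a * M ^ p * b ^ (p - 1)) :
    1 / M ≤ a ^ (1 / p) * b ^ (1 / q) := by
  have hM_pos : 0 < M := by
    refine hM.lt_of_ne fun h₀ => ?_
    norm_num [← h₀, Real.zero_rpow hp.ne'] at h
  have hpow : a * M ^ p * b ^ (p - 1) = (a ^ (1 / p) * b ^ (1 / q) * M) ^ p := by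
    have hq : 1 / q * p = p - 1 := by field_simp at hpq ⊢; linarith
    rw [Real.mul_rpow (by positivity) hM, Real.mul_rpow (by positivity) (by positivity),
      ← Real.rpow_mul ha, ← Real.rpow_mul hb, one_div_mul_cancel hp.ne', Real.rpow_one, hq]
    ring
  rw [div_le_iff₀ hM_pos, ← Real.rpow_le_rpow_iff zero_le_one (by positivity) hp, Real.one_rpow]
  exact hpow ▸ h

theorem functional_donoho_stark_second_general
    {𝕂 : Type*} [RCLike 𝕂]
    {X : Type*} [NormedAddCommGroup X] [NormedSpace 𝕂 X]
    {n m : ℕ} (p q : ℝ) (hp : 1 < p) (hpq : 1 / p + 1 / q = 1)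
    (f : Fin n → X →L[𝕂] 𝕂) (τ : Fin n → X)
    (g : Fin m → X →L[𝕂] 𝕂)
    -- `(f, τ)` is a p-Schauder frame for `X` :
    (hf_norm : ∀ x : X, ‖x‖ ^ p = ∑ j, ‖f j x‖ ^ p)
    (hf_rec : ∀ x : X, x = ∑ j, f j x • τ j)
    -- `(g, ω)` is a p-Schauder frame for `X` :
    (hg_norm : ∀ x : X, ‖x‖ ^ p = ∑ k, ‖g k x‖ ^ p)
    (x : X) (hx : x ≠ 0) :
    1 / (⨆ (j : Fin n) (k : Fin m), ‖g k (τ j)‖) ≤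
      (Nat.card {k : Fin m // g k x ≠ 0} : ℝ) ^ (1 / p) *
        (Nat.card {j : Fin n // f j x ≠ 0} : ℝ) ^ (1 / q) := by
  set M := ⨆ (j : Fin n) (k : Fin m), ‖g k (τ j)‖
  set Nf : ℝ := (Nat.card {j : Fin n // f j x ≠ 0} : ℝ)
  have hM : ∀ j k, ‖g k (τ j)‖ ≤ M := fun j k =>
    le_ciSup_of_le (Set.finite_range _).bddAbove j
      (le_ciSup (f := fun k => ‖g k (τ j)‖) (Set.finite_range _).bddAbove k)
  have hM₀ : 0 ≤ M := Real.iSup_nonneg fun j => Real.iSup_nonneg fun k => norm_nonneg _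
  have hg_le : ∀ k, ‖g k x‖ ^ p ≤ M ^ p * Nf ^ (p - 1) * ‖x‖ ^ p := by
    intro k
    have hgk := norm_map_sum_smul_le_s5 (g k : X →ₗ[𝕂] 𝕂) (fun j => f j x) τ (fun j => hM j k)
    rw [ContinuousLinearMap.coe_coe, ← hf_rec x] at hgk
    calc ‖g k x‖ ^ p ≤ (M * ∑ j, ‖f j x‖) ^ p := by gcongr
      _ = M ^ p * (∑ j, ‖f j x‖) ^ p := Real.mul_rpow hM₀ (by positivity)
      _ ≤ M ^ p * (Nf ^ (p - 1) * ∑ j, ‖f j x‖ ^ p) := by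
          gcongr
          exact rpow_sum_norm_le_card_support_rpow_mul hp.le _
      _ = M ^ p * Nf ^ (p - 1) * ‖x‖ ^ p := by rw [← hf_norm x, mul_assoc]
  have hx_le : ‖x‖ ^ p ≤ Nat.card {k : Fin m // g k x ≠ 0} * (M ^ p * Nf ^ (p - 1) * ‖x‖ ^ p) :=
    (hg_norm x).trans_le (sum_norm_rpow_le_card_support_mul (by linarith) (fun k => g k x) hg_le)
  refine one_div_le_rpow_mul_rpow_of_one_le_mul_rpow (by linarith) hpq (by positivity)
    (by positivity) hM₀ ?_
  rw [← mul_assoc, ← mul_assoc] at hx_le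
  exact (le_mul_iff_one_le_left (Real.rpow_pos_of_pos (norm_pos_iff.mpr hx) p)).mp hx_le

/-- **Functional Donoho-Stark-Elad-Bruckstein-Ricaud-Torrésani Uncertainty Principle**
(second inequality). If `(f, τ)` and `(g, ω)` are p-Schauder frames for a
finite-dimensional Banach space `X`, then for every nonzero `x`,
`‖θ_g x‖₀^(1/p) * ‖θ_f x‖₀^(1/q) ≥ 1 / max_{j,k} |g_k(τ_j)|`. -/
theorem functional_donoho_stark_second
    {𝕂 : Type*} [RCLike 𝕂]
    {X : Type*} [NormedAddCommGroup X] [NormedSpace 𝕂 X] [FiniteDimensional 𝕂 X]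
    {n m : ℕ} (p q : ℝ) (hp : 1 < p) (hpq : 1 / p + 1 / q = 1)
    (f : Fin n → X →L[𝕂] 𝕂) (τ : Fin n → X)
    (g : Fin m → X →L[𝕂] 𝕂) (ω : Fin m → X)
    -- `(f, τ)` is a p-Schauder frame for `X` :
    (hf_norm : ∀ x : X, ‖x‖ ^ p = ∑ j, ‖f j x‖ ^ p)
    (hf_rec : ∀ x : X, x = ∑ j, f j x • τ j)
    -- `(g, ω)` is a p-Schauder frame for `X` :
    (hg_norm : ∀ x : X, ‖x‖ ^ p = ∑ k, ‖g k x‖ ^ p)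
    (hg_rec : ∀ x : X, x = ∑ k, g k x • ω k)
    (x : X) (hx : x ≠ 0) :
    1 / (⨆ (j : Fin n) (k : Fin m), ‖g k (τ j)‖) ≤
      (Nat.card {k : Fin m // g k x ≠ 0} : ℝ) ^ (1 / p) *
        (Nat.card {j : Fin n // f j x ≠ 0} : ℝ) ^ (1 / q) :=
  functional_donoho_stark_second_general p q hp hpq f τ g hf_norm hf_rec hg_norm x hx
end

section
/- (Donoho–Stark Uncertainty Principle) For every d ∈ ℕ with d ≥ 1 and every h ∈ ℂ^d with h ≠ 0, we have ‖h‖₀ · ‖ĥ‖₀ ≥ d, where ĥ is the discrete Fourier transform of h. -/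
/-!
Write `‖Φ‖` for the sup norm of `Φ : ZMod N → E`. Each Fourier coefficient is a sum of
`#supp Φ` terms of norm at most `‖Φ‖`, so `‖𝓕 Φ‖ ≤ #supp Φ * ‖Φ‖`. Applying this to `𝓕 Φ` and using
the inversion formula `𝓕 (𝓕 Φ) = N • Φ ∘ neg` gives `N * ‖Φ‖ ≤ #supp 𝓕Φ * #supp Φ * ‖Φ‖`,
and `‖Φ‖ > 0` can be cancelled.
-/

open Finset ZMod

theorem norm_sum_le_card_ne_zero_mul {ι E : Type*} [Fintype ι] [SeminormedAddCommGroup E]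
    (f : ι → E) {M : ℝ} (hM : ∀ i, ‖f i‖ ≤ M) :
    ‖∑ i, f i‖ ≤ Nat.card {i // f i ≠ 0} * M := by
  classical
  rw [Nat.card_eq_fintype_card, Fintype.card_subtype, ← sum_filter_ne_zero]
  calc ‖∑ i ∈ univ.filter (f · ≠ 0), f i‖ ≤ ∑ i ∈ univ.filter (f · ≠ 0), ‖f i‖ := norm_sum_le _ _
    _ ≤ #(univ.filter (f · ≠ 0)) * M := by
      simpa using sum_le_card_nsmul _ _ _ fun i _ ↦ hM i

namespace ZMod

variable {N : ℕ} [NeZero N] {E : Type*} [NormedAddCommGroup E] [NormedSpace ℂ E]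

theorem norm_dft_le (Φ : ZMod N → E) : ‖𝓕 Φ‖ ≤ Nat.card {j // Φ j ≠ 0} * ‖Φ‖ := by
  refine (pi_norm_le_iff_of_nonneg (by positivity)).2 fun k ↦ ?_
  have hterm (j : ZMod N) : ‖stdAddChar (-(j * k)) • Φ j‖ = ‖Φ j‖ := by simp [norm_smul]
  have hsupp : Nat.card {j // stdAddChar (-(j * k)) • Φ j ≠ 0} = Nat.card {j // Φ j ≠ 0} :=
    Nat.card_congr <| Equiv.subtypeEquivRight fun j ↦ by
      rw [← norm_ne_zero_iff, hterm, norm_ne_zero_iff]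
  rw [dft_apply, ← hsupp]
  exact norm_sum_le_card_ne_zero_mul _ fun j ↦ (hterm j).trans_le (norm_le_pi_norm Φ j)

theorem norm_dft_dft (Φ : ZMod N → E) : ‖𝓕 (𝓕 Φ)‖ = N * ‖Φ‖ := by
  rw [dft_dft, show (fun j ↦ (N : ℂ) • Φ (-j)) = (N : ℂ) • (Φ ∘ Neg.neg) from rfl, norm_smul,
    neg_surjective.pi_norm_comp]
  simp

theorem le_card_ne_zero_mul_card_dft_ne_zero {Φ : ZMod N → E} (hΦ : Φ ≠ 0) :
    N ≤ Nat.card {j // Φ j ≠ 0} * Nat.card {k // 𝓕 Φ k ≠ 0} := by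
  have hbound : (N : ℝ) * ‖Φ‖ ≤
      (Nat.card {j // Φ j ≠ 0} * Nat.card {k // 𝓕 Φ k ≠ 0} : ℕ) * ‖Φ‖ :=
    calc (N : ℝ) * ‖Φ‖ = ‖𝓕 (𝓕 Φ)‖ := (norm_dft_dft Φ).symm
      _ ≤ Nat.card {k // 𝓕 Φ k ≠ 0} * ‖𝓕 Φ‖ := norm_dft_le _
      _ ≤ Nat.card {k // 𝓕 Φ k ≠ 0} * (Nat.card {j // Φ j ≠ 0} * ‖Φ‖) := by
        gcongr; exact norm_dft_le Φ
      _ = (Nat.card {j // Φ j ≠ 0} * Nat.card {k // 𝓕 Φ k ≠ 0} : ℕ) * ‖Φ‖ := by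
        push_cast; ring
  exact_mod_cast le_of_mul_le_mul_right hbound (norm_pos_iff.2 hΦ)

end ZMod

theorem donoho_stark_uncertainty_general
    (d : ℕ) [NeZero d] (h : ZMod d → ℂ) (hh : h ≠ 0) :
    d ≤ Nat.card {j : ZMod d // h j ≠ 0} *
        Nat.card {k : ZMod d // ZMod.dft h k ≠ 0} :=
  ZMod.le_card_ne_zero_mul_card_dft_ne_zero hh

/-- **Donoho-Stark Uncertainty Principle**: for every `d ≥ 1` and every nonzero
`h : ZMod d → ℂ`, `‖h‖₀ * ‖ĥ‖₀ ≥ d`, where `ĥ` is the discrete Fourier transform of `h`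
and `‖·‖₀` counts nonzero entries. -/
theorem donoho_stark_uncertainty
    (d : ℕ) [NeZero d] (hd : 1 ≤ d) (h : ZMod d → ℂ) (hh : h ≠ 0) :
    d ≤ Nat.card {j : ZMod d // h j ≠ 0} *
        Nat.card {k : ZMod d // ZMod.dft h k ≠ 0} :=
  donoho_stark_uncertainty_general d h hh
end

section
/- (Elad–Bruckstein Uncertainty Principle) Let {τ_j}_{j=1}^n and {ω_j}_{j=1}^n be two orthonormal bases for an n-dimensional Hilbert space H over 𝕂 (ℝ or ℂ). Then for every h ∈ H with h ≠ 0, ‖θ_τ h‖₀ · ‖θ_ω h‖₀ ≥ 1 / max_{1≤j,k≤n} |⟨τ_j, ω_k⟩|². -/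
/-!
Write `S` and `T` for the supports of the coefficients of `h` in `τ` and `ω`, and `M` for the
largest `|⟪τ j, ω k⟫|²`. Expanding in `τ`, `⟪h, ω k⟫ = ∑_{j ∈ S} ⟪h, τ j⟫ ⟪τ j, ω k⟫`, so
Cauchy–Schwarz and Parseval give `|⟪h, ω k⟫|² ≤ |S| M ‖h‖²`. Summing over `k ∈ T` and using
Parseval in `ω` yields `‖h‖² ≤ |S| |T| M ‖h‖²`, and `h ≠ 0` lets us cancel `‖h‖²`.
-/

open Finset

namespace OrthonormalBasis

variable {ι κ 𝕂 H : Type*} [Fintype ι] [Fintype κ] [RCLike 𝕂]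
  [NormedAddCommGroup H] [InnerProductSpace 𝕂 H]

theorem sum_support_sq_norm_inner_left (τ : OrthonormalBasis ι 𝕂 H) (h : H) :
    ∑ j with inner 𝕂 h (τ j) ≠ 0, ‖(inner 𝕂 h (τ j) : 𝕂)‖ ^ 2 = ‖h‖ ^ 2 := by
  rw [sum_filter_of_ne fun j _ hj ↦ by simpa using hj, τ.sum_sq_norm_inner_left]

theorem sq_norm_inner_le_card_support_mul (τ : OrthonormalBasis ι 𝕂 H) (h v : H) {M : ℝ}
    (hM : ∀ j, ‖(inner 𝕂 (τ j) v : 𝕂)‖ ^ 2 ≤ M) :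
    ‖(inner 𝕂 h v : 𝕂)‖ ^ 2 ≤ #{j | inner 𝕂 h (τ j) ≠ 0} * M * ‖h‖ ^ 2 := by
  set S : Finset ι := {j | inner 𝕂 h (τ j) ≠ 0}
  have expand : (inner 𝕂 h v : 𝕂) = ∑ j ∈ S, inner 𝕂 h (τ j) * inner 𝕂 (τ j) v := by
    rw [← τ.sum_inner_mul_inner h v, sum_filter_of_ne fun j _ hj ↦ left_ne_zero_of_mul hj]
  calc ‖(inner 𝕂 h v : 𝕂)‖ ^ 2
      ≤ (∑ j ∈ S, ‖(inner 𝕂 h (τ j) : 𝕂)‖ * ‖(inner 𝕂 (τ j) v : 𝕂)‖) ^ 2 := by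
        rw [expand]
        gcongr
        exact (norm_sum_le _ _).trans_eq (by simp only [norm_mul])
    _ ≤ (∑ j ∈ S, ‖(inner 𝕂 h (τ j) : 𝕂)‖ ^ 2) * ∑ j ∈ S, ‖(inner 𝕂 (τ j) v : 𝕂)‖ ^ 2 :=
        sum_mul_sq_le_sq_mul_sq _ _ _
    _ ≤ ‖h‖ ^ 2 * (#S * M) := by
        rw [τ.sum_support_sq_norm_inner_left]
        gcongr
        simpa using sum_le_sum fun j (_ : j ∈ S) ↦ hM j
    _ = #S * M * ‖h‖ ^ 2 := by ring

theorem one_le_mul_card_support_mul_card_support (τ : OrthonormalBasis ι 𝕂 H)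
    (ω : OrthonormalBasis κ 𝕂 H) {M : ℝ} (hM : ∀ j k, ‖(inner 𝕂 (τ j) (ω k) : 𝕂)‖ ^ 2 ≤ M)
    {h : H} (hh : h ≠ 0) :
    1 ≤ M * #{j | inner 𝕂 h (τ j) ≠ 0} * #{k | inner 𝕂 h (ω k) ≠ 0} := by
  set S : Finset ι := {j | inner 𝕂 h (τ j) ≠ 0}
  set T : Finset κ := {k | inner 𝕂 h (ω k) ≠ 0}
  have hh2 : 0 < ‖h‖ ^ 2 := by positivity
  have hsum : ‖h‖ ^ 2 ≤ (M * #S * #T) * ‖h‖ ^ 2 :=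
    calc ‖h‖ ^ 2 = ∑ k ∈ T, ‖(inner 𝕂 h (ω k) : 𝕂)‖ ^ 2 :=
          (ω.sum_support_sq_norm_inner_left h).symm
      _ ≤ ∑ k ∈ T, #S * M * ‖h‖ ^ 2 :=
          sum_le_sum fun k _ ↦ τ.sq_norm_inner_le_card_support_mul h (ω k) (hM · k)
      _ = (M * #S * #T) * ‖h‖ ^ 2 := by rw [sum_const, nsmul_eq_mul]; ring
  exact le_of_mul_le_mul_right ((one_mul _).trans_le hsum) hh2

end OrthonormalBasis

/-- **Elad-Bruckstein Uncertainty Principle**: if `τ` and `ω` are two orthonormal bases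
for an `n`-dimensional Hilbert space `H`, then for every nonzero `h`,
`‖θ_τ h‖₀ * ‖θ_ω h‖₀ ≥ 1 / max_{j,k} |⟪τ_j, ω_k⟫|²`. -/
theorem elad_bruckstein_uncertainty
    {𝕂 : Type*} [RCLike 𝕂]
    {H : Type*} [NormedAddCommGroup H] [InnerProductSpace 𝕂 H]
    {n : ℕ} (τ ω : OrthonormalBasis (Fin n) 𝕂 H)
    (h : H) (hh : h ≠ 0) :
    1 / (⨆ (j : Fin n) (k : Fin n), ‖(inner 𝕂 (τ j) (ω k) : 𝕂)‖ ^ 2) ≤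
      (Nat.card {j : Fin n // (inner 𝕂 h (τ j) : 𝕂) ≠ 0} : ℝ) *
        (Nat.card {k : Fin n // (inner 𝕂 h (ω k) : 𝕂) ≠ 0} : ℝ) := by
  set M := ⨆ (j : Fin n) (k : Fin n), ‖(inner 𝕂 (τ j) (ω k) : 𝕂)‖ ^ 2
  have hM j k : ‖(inner 𝕂 (τ j) (ω k) : 𝕂)‖ ^ 2 ≤ M :=
    (le_ciSup (Finite.bddAbove_range fun k ↦ ‖(inner 𝕂 (τ j) (ω k) : 𝕂)‖ ^ 2) k).trans
      (le_ciSup (Finite.bddAbove_range fun j ↦ ⨆ k, ‖(inner 𝕂 (τ j) (ω k) : 𝕂)‖ ^ 2) j)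
  have key := τ.one_le_mul_card_support_mul_card_support ω hM hh
  have hMpos : 0 < M := pos_of_mul_pos_left (pos_of_mul_pos_left
    (zero_lt_one.trans_le key) (by positivity)) (by positivity)
  simp only [Nat.card_eq_fintype_card, Fintype.card_subtype]
  rw [div_le_iff₀ hMpos]
  linarith
end

section
/- (Donoho–Elad Sparsity Theorem) Let {τ_j}_{j=1}^n be a family of unit vectors spanning a finite-dimensional Hilbert space H over 𝕂 (ℝ or ℂ), with coherence M = max_{1≤j,k≤n, j≠k} |⟨τ_j, τ_k⟩| > 0. Suppose h ∈ H can be written as h = ∑_{j=1}^n c_j τ_j for some c ∈ 𝕂^n with ‖c‖₀ < (1/2)(1 + 1/M). Then c is the unique solution of the ℓ₀-minimization problem: for every d ∈ 𝕂^n with h = ∑_{j=1}^n d_j τ_j and d ≠ c, we have ‖d‖₀ > ‖c‖₀. -/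
/-!
Subtracting two representations of `h` gives a nonzero null combination `u = d - c` of the `τ j`.
Pairing it with the atom `τ i` at which `‖u i‖` is largest isolates `u i` (since `⟪τ i, τ i⟫ = 1`)
against at most `‖u‖₀ - 1` cross terms of size `≤ M ‖u i‖`, so `‖u‖₀ ≥ 1 + 1/M`. As
`‖u‖₀ ≤ ‖c‖₀ + ‖d‖₀` and `2 ‖c‖₀ < 1 + 1/M`, this forces `‖d‖₀ > ‖c‖₀`.
-/

open Finset

section Coherence

variable {𝕂 : Type*} [RCLike 𝕂] {H : Type*} [NormedAddCommGroup H] [InnerProductSpace 𝕂 H]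
  {ι : Type*}

lemma norm_inner_le_iSup_inner [Finite ι] (τ : ι → H) {j k : ι} (hjk : j ≠ k) :
    ‖(inner 𝕂 (τ j) (τ k) : 𝕂)‖ ≤ ⨆ (j : ι) (k : ι) (_ : j ≠ k), ‖(inner 𝕂 (τ j) (τ k) : 𝕂)‖ :=
  le_ciSup_of_le (Set.finite_range _).bddAbove j <|
    le_ciSup_of_le (Set.finite_range _).bddAbove k <|
      le_ciSup (f := fun _ : j ≠ k => ‖(inner 𝕂 (τ j) (τ k) : 𝕂)‖)
        (Set.finite_range _).bddAbove hjk

lemma norm_le_mul_sum_erase_of_sum_smul_eq_zero [Fintype ι] [DecidableEq ι] {τ : ι → H}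
    (hunit : ∀ j, ‖τ j‖ = 1) {M : ℝ} (hM : ∀ j k, j ≠ k → ‖(inner 𝕂 (τ j) (τ k) : 𝕂)‖ ≤ M)
    {u : ι → 𝕂} (hu : ∑ j, u j • τ j = 0) (i : ι) :
    ‖u i‖ ≤ M * ∑ j ∈ univ.erase i, ‖u j‖ := by
  have hpair : u i + ∑ j ∈ univ.erase i, u j * inner 𝕂 (τ i) (τ j) = 0 := by
    have h0 : inner 𝕂 (τ i) (∑ j, u j • τ j) = 0 := by rw [hu, inner_zero_right]
    rwa [inner_sum, ← add_sum_erase _ _ (mem_univ i), inner_smul_right,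
      inner_self_eq_norm_sq_to_K, hunit, RCLike.ofReal_one, one_pow, mul_one,
      sum_congr rfl fun j _ => inner_smul_right _ _ _] at h0
  calc ‖u i‖ = ‖∑ j ∈ univ.erase i, u j * inner 𝕂 (τ i) (τ j)‖ := by
        rw [eq_neg_of_add_eq_zero_left hpair, norm_neg]
    _ ≤ ∑ j ∈ univ.erase i, ‖u j‖ * M := by
        refine (norm_sum_le _ _).trans (sum_le_sum fun j hj => ?_)
        rw [norm_mul]
        exact mul_le_mul_of_nonneg_left (hM i j (ne_of_mem_erase hj).symm) (norm_nonneg _)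
    _ = M * ∑ j ∈ univ.erase i, ‖u j‖ := by rw [← sum_mul, mul_comm]

theorem one_le_card_support_sub_one_mul_of_sum_smul_eq_zero [Fintype ι] {τ : ι → H}
    (hunit : ∀ j, ‖τ j‖ = 1) {M : ℝ} (hM : ∀ j k, j ≠ k → ‖(inner 𝕂 (τ j) (τ k) : 𝕂)‖ ≤ M)
    {u : ι → 𝕂} (hu : ∑ j, u j • τ j = 0) (hu0 : u ≠ 0) :
    1 ≤ ((#{j | u j ≠ 0} : ℕ) - 1 : ℝ) * M := by
  classical
  obtain ⟨i₀, hi₀⟩ := Function.ne_iff.mp hu0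
  obtain ⟨i, -, hmax⟩ := exists_max_image univ (fun j => ‖u j‖) ⟨i₀, mem_univ _⟩
  have hpos : 0 < ‖u i‖ := (norm_pos_iff.mpr hi₀).trans_le (hmax i₀ (mem_univ _))
  have hi : i ∈ ({j | u j ≠ 0} : Finset ι) := by simpa using norm_pos_iff.mp hpos
  have hsum : ∑ j ∈ univ.erase i, ‖u j‖ ≤ ((#{j | u j ≠ 0} : ℕ) - 1 : ℝ) * ‖u i‖ := by
    calc ∑ j ∈ univ.erase i, ‖u j‖ = ∑ j ∈ ({j | u j ≠ 0} : Finset ι).erase i, ‖u j‖ := by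
          refine (sum_subset (erase_subset_erase _ (subset_univ _)) fun j hj hj' => ?_).symm
          simpa [ne_of_mem_erase hj] using hj'
      _ ≤ #(({j | u j ≠ 0} : Finset ι).erase i) • ‖u i‖ :=
          sum_le_card_nsmul _ _ _ fun j _ => hmax j (mem_univ _)
      _ = ((#{j | u j ≠ 0} : ℕ) - 1 : ℝ) * ‖u i‖ := by
          rw [nsmul_eq_mul, card_erase_of_mem hi, Nat.cast_pred (card_pos.mpr ⟨i, hi⟩)]
  have hdom := norm_le_mul_sum_erase_of_sum_smul_eq_zero hunit hM hu i
  have hM0 : 0 < M :=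
    pos_of_mul_pos_left (hpos.trans_le hdom) (sum_nonneg fun j _ => norm_nonneg _)
  nlinarith [mul_le_mul_of_nonneg_left hsum hM0.le]

lemma card_filter_sub_ne_zero_le {G : Type*} [AddGroup G] [DecidableEq G] [Fintype ι]
    (c d : ι → G) : #{j | (d - c) j ≠ 0} ≤ #{j | c j ≠ 0} + #{j | d j ≠ 0} := by
  classical
  refine (card_le_card fun j => ?_).trans (card_union_le _ _)
  simp only [mem_filter, mem_union, mem_univ, true_and, Pi.sub_apply]
  contrapose!
  rintro ⟨hc, hd⟩
  rw [hc, hd, sub_zero]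

end Coherence

theorem donoho_elad_sparsity_general
    {𝕂 : Type*} [RCLike 𝕂]
    {H : Type*} [NormedAddCommGroup H] [InnerProductSpace 𝕂 H]
    {n : ℕ} (τ : Fin n → H)
    (hunit : ∀ j, ‖τ j‖ = 1)
    (M : ℝ)
    (hM : M = ⨆ (j : Fin n) (k : Fin n) (_ : j ≠ k), ‖(inner 𝕂 (τ j) (τ k) : 𝕂)‖)
    (hM0 : 0 < M)
    (h : H) (c : Fin n → 𝕂)
    (hc : h = ∑ j, c j • τ j)
    (hsparse : (Nat.card {j : Fin n // c j ≠ 0} : ℝ) < (1 / 2) * (1 + 1 / M)) :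
    ∀ d : Fin n → 𝕂, h = ∑ j, d j • τ j → d ≠ c →
      Nat.card {j : Fin n // c j ≠ 0} < Nat.card {j : Fin n // d j ≠ 0} := by
  intro d hd hdc
  have hcoh : ∀ j k, j ≠ k → ‖(inner 𝕂 (τ j) (τ k) : 𝕂)‖ ≤ M := fun j k hjk =>
    hM ▸ norm_inner_le_iSup_inner τ hjk
  have hnull : ∑ j, (d - c) j • τ j = 0 := by
    simp only [Pi.sub_apply, sub_smul, sum_sub_distrib, ← hc, ← hd, sub_self]
  have hspark := one_le_card_support_sub_one_mul_of_sum_smul_eq_zero hunit hcoh hnull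
    (sub_ne_zero.mpr hdc)
  have hgap : 1 + 1 / M ≤ #{j | (d - c) j ≠ 0} := by
    linarith [(div_le_iff₀ hM0).mpr hspark]
  have hsupp : (#{j | (d - c) j ≠ 0} : ℝ) ≤ #{j | c j ≠ 0} + #{j | d j ≠ 0} := by
    exact_mod_cast card_filter_sub_ne_zero_le c d
  simp only [Nat.card_eq_fintype_card, Fintype.card_subtype] at hsparse ⊢
  exact_mod_cast (by linarith : (#{j | c j ≠ 0} : ℝ) < #{j | d j ≠ 0})

/-- **Donoho-Elad Sparsity Theorem**: let `τ` be a family of unit vectors spanning a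
finite-dimensional Hilbert space `H` with coherence `M > 0`. If `h = ∑ j, c j • τ j` with
`‖c‖₀ < (1/2)(1 + 1/M)`, then `c` is the unique solution of the `ℓ₀`-minimization
problem: any other representation `h = ∑ j, d j • τ j` with `d ≠ c` satisfies
`‖d‖₀ > ‖c‖₀`. -/
theorem donoho_elad_sparsity
    {𝕂 : Type*} [RCLike 𝕂]
    {H : Type*} [NormedAddCommGroup H] [InnerProductSpace 𝕂 H] [FiniteDimensional 𝕂 H]
    {n : ℕ} (τ : Fin n → H)
    (hunit : ∀ j, ‖τ j‖ = 1)
    (hspan : Submodule.span 𝕂 (Set.range τ) = ⊤)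
    (M : ℝ)
    (hM : M = ⨆ (j : Fin n) (k : Fin n) (_ : j ≠ k), ‖(inner 𝕂 (τ j) (τ k) : 𝕂)‖)
    (hM0 : 0 < M)
    (h : H) (c : Fin n → 𝕂)
    (hc : h = ∑ j, c j • τ j)
    (hsparse : (Nat.card {j : Fin n // c j ≠ 0} : ℝ) < (1 / 2) * (1 + 1 / M)) :
    ∀ d : Fin n → 𝕂, h = ∑ j, d j • τ j → d ≠ c →
      Nat.card {j : Fin n // c j ≠ 0} < Nat.card {j : Fin n // d j ≠ 0} :=
  donoho_elad_sparsity_general τ hunit M hM hM0 h c hc hsparse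
end
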